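/- Let y ∈ D([0,T], S_m) with m ≥ 2 and set x = R_{m−1} y. If x is discontinuous at some t ∈ (0,T], then y(t) = x(t) and y is discontinuous at t. -/

import Mathlib

open Filter Topology Set

noncomputable section
namespace Soft

abbrev Sd := ℕ∞

noncomputable def sval (k : Sd) : ℝ := if k = ⊤ then 0 else 1 / ((k.toNat : ℝ) + 1)

noncomputable def sdist (k j : Sd) : ℝ := |sval k - sval j|

/-- left-limit filter within `[0,T]` -/
def lf (T t : ℝ) : Filter ℝ := 𝓝[Set.Icc 0 T ∩ Set.Iio t] t

/-- right-limit filter within `[0,T]` -/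
def rf (T t : ℝ) : Filter ℝ := 𝓝[Set.Icc 0 T ∩ Set.Ioi t] t

def leftLim (T : ℝ) (x : ℝ → Sd) (t : ℝ) (L : Sd) : Prop := Tendsto x (lf T t) (𝓝 L)

def rightLim (T : ℝ) (x : ℝ → Sd) (t : ℝ) (L : Sd) : Prop := Tendsto x (rf T t) (𝓝 L)

/-- the set of cluster points of `x(s)`, `s ↑ t`, is exactly the pair `{n, ∞}` -/
def softLeftPair (T : ℝ) (x : ℝ → Sd) (t : ℝ) (n : ℕ) : Prop :=
  {L : Sd | MapClusterPt L (lf T t) x} = {(n : Sd), ⊤}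

def softRightPair (T : ℝ) (x : ℝ → Sd) (t : ℝ) (n : ℕ) : Prop :=
  {L : Sd | MapClusterPt L (rf T t) x} = {(n : Sd), ⊤}

/-- `x` has a soft left-limit at `t` -/
def softLeftLim (T : ℝ) (x : ℝ → Sd) (t : ℝ) : Prop :=
  (∃ L, leftLim T x t L) ∨ ∃ n : ℕ, softLeftPair T x t n

/-- `x` is soft right-continuous at `t` -/
def softRightCont (T : ℝ) (x : ℝ → Sd) (t : ℝ) : Prop :=
  rightLim T x t ⊤ ∨ (∃ n : ℕ, rightLim T x t (n : Sd) ∧ x t = (n : Sd)) ∨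
    ∃ n : ℕ, softRightPair T x t n ∧ x t = (n : Sd)

/-- the space `𝔼([0,T], S_d)` of soft right-continuous trajectories with soft left-limits -/
def memBbE (T : ℝ) (x : ℝ → Sd) : Prop :=
  (∀ t ∈ Set.Icc 0 T, softRightCont T x t) ∧ ∀ t ∈ Set.Ioc 0 T, softLeftLim T x t

/-- time of last visit before `t` to the set `{k : P k}` (with the convention `= 0`
if there is no such visit, since `sSup ∅ = 0` in `ℝ`) -/
def lastVisit (P : Sd → Prop) (x : ℝ → Sd) (t : ℝ) : ℝ :=
  sSup {s | s ∈ Set.Icc 0 t ∧ P (x s)}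

open Classical in
/-- the record operator: the last value in `{k : P k}` visited by `x` before time `t`;
equal to the bottom state `0` before the first visit -/
noncomputable def srec (T : ℝ) (P : Sd → Prop) (x : ℝ → Sd) (t : ℝ) : Sd :=
  if ∃ s ∈ Set.Icc 0 t, P (x s) then
    if P (x (lastVisit P x t)) then x (lastVisit P x t)
    else if h : ∃ L, leftLim T x (lastVisit P x t) L then h.choose
    else if h2 : ∃ n : ℕ, softLeftPair T x (lastVisit P x t) n then (h2.choose : Sd)
    else 0
  else 0

/-- `R_m`, the operator recording the last site visited in `S_m = {0,…,m}` -/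
noncomputable def Rm (T : ℝ) (m : ℕ) (x : ℝ → Sd) : ℝ → Sd :=
  srec T (fun k => k ≤ (m : Sd)) x

/-- `R_∞`, the operator recording the last site visited in `ℕ` -/
noncomputable def Rinf (T : ℝ) (x : ℝ → Sd) : ℝ → Sd := srec T (fun k => k ≠ ⊤) x

/-- `σ_∞(t)`, the time of the last visit to `ℕ` before `t` -/
def sigmaInf (x : ℝ → Sd) (t : ℝ) : ℝ := lastVisit (fun k => k ≠ ⊤) x t

/-- `D([0,T], S_m)`: càdlàg trajectories with values in `S_m = {0,…,m}` -/
def memD (T : ℝ) (m : ℕ) (x : ℝ → Sd) : Prop :=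
  (∀ t ∈ Set.Icc 0 T, x t ≤ (m : Sd)) ∧
  (∀ t ∈ Set.Ico 0 T, rightLim T x t (x t)) ∧
  ∀ t ∈ Set.Ioc 0 T, ∃ L, leftLim T x t L

/-- `D([0,T], S_d)`: càdlàg trajectories with values in `S_d` -/
def memDd (T : ℝ) (x : ℝ → Sd) : Prop :=
  (∀ t ∈ Set.Ico 0 T, rightLim T x t (x t)) ∧
  ∀ t ∈ Set.Ioc 0 T, ∃ L, leftLim T x t L

/-- the space `E([0,T], S_d)` -/
def memE (T : ℝ) (x : ℝ → Sd) : Prop :=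
  memBbE T x ∧ x 0 ≠ ⊤ ∧
  ∀ t ∈ Set.Ioc 0 T, x t = ⊤ →
    0 < sigmaInf x t ∧ x (sigmaInf x t) = ⊤ ∧ leftLim T x (sigmaInf x t) ⊤

/-- `Λ_T(x)`, the time spent at `∞` -/
noncomputable def LambdaT (T : ℝ) (x : ℝ → Sd) : ℝ :=
  (MeasureTheory.volume {s | s ∈ Set.Icc 0 T ∧ x s = ⊤}).toReal

/-- `D^*([0,T], S_d)`: càdlàg trajectories spending no time at `∞`, continuous at `T` -/
def memDstar (T : ℝ) (x : ℝ → Sd) : Prop :=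
  memDd T x ∧ LambdaT T x = 0 ∧ leftLim T x T (x T)

/-- `E^*([0,T], S_d)`: the image of `D^*([0,T], S_d)` under `R_∞` -/
def memEstar (T : ℝ) (x : ℝ → Sd) : Prop :=
  memE T x ∧ ∃ y, memDstar T y ∧ Set.EqOn (Rinf T y) x (Set.Icc 0 T)

/-- the set `Λ` of time changes: increasing continuous bijections of `[0,T]` fixing `0, T` -/
def TimeChange (T : ℝ) (l : ℝ → ℝ) : Prop :=
  l 0 = 0 ∧ l T = T ∧ ContinuousOn l (Set.Icc 0 T) ∧ StrictMonoOn l (Set.Icc 0 T) ∧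
    Set.MapsTo l (Set.Icc 0 T) (Set.Icc 0 T)

/-- the Skorohod metric -/
noncomputable def dS (T : ℝ) (x y : ℝ → Sd) : ℝ :=
  sInf {a : ℝ | ∃ l, TimeChange T l ∧
    (∀ t ∈ Set.Icc 0 T, sdist (x t) (y (l t)) ≤ a) ∧
    ∀ s ∈ Set.Icc 0 T, ∀ t ∈ Set.Icc 0 T, s < t → |Real.log ((l t - l s) / (t - s))| ≤ a}

/-- the soft metric `d(x,y) = Σ_m 2^{-(m+1)} d_S(R_m x, R_m y)` -/
noncomputable def dE (T : ℝ) (x y : ℝ → Sd) : ℝ :=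
  ∑' m : ℕ, (1 / 2 : ℝ) ^ (m + 1) * dS T (Rm T m x) (Rm T m y)

/-- the left endpoints of the maximal intervals on which `x = j` -/
def entryPoints (T : ℝ) (j : Sd) (x : ℝ → Sd) : Set ℝ :=
  {t | t ∈ Set.Icc 0 T ∧ x t = j ∧
    (t = 0 ∨ ∀ δ > 0, ∃ s ∈ Set.Ioo (t - δ) t ∩ Set.Icc 0 T, x s ≠ j)}

/-- `N_j(x)`, the number of visits of `x` to `j` -/
noncomputable def Nvisits (T : ℝ) (j : Sd) (x : ℝ → Sd) : ℕ := (entryPoints T j x).ncard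

/-- the start of the `(l+1)`-th visit to `j` (0-indexed) -/
noncomputable def nthEntry (T : ℝ) (j : Sd) (x : ℝ → Sd) (l : ℕ) : ℝ :=
  sInf {e | e ∈ entryPoints T j x ∧ {s | s ∈ entryPoints T j x ∧ s < e}.ncard = l}

noncomputable def exitTime (T : ℝ) (j : Sd) (x : ℝ → Sd) (t : ℝ) : ℝ :=
  sInf ({s | s ∈ Set.Ioc t T ∧ x s ≠ j} ∪ {T})

/-- `T_{j,l}(x)`, the length of the `l`-th holding interval at `j` (1-indexed),
`0` if `l > N_j(x)` -/
noncomputable def holdingTime (T : ℝ) (j : Sd) (x : ℝ → Sd) (l : ℕ) : ℝ :=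
  if 1 ≤ l ∧ l ≤ Nvisits T j x then
    exitTime T j x (nthEntry T j x (l - 1)) - nthEntry T j x (l - 1)
  else 0

end Soft

/-! Finite states are isolated in `ℕ∞`, so the finite left limit `L` of `y` at `t` is attained
on an interval `(s₀, t)`. If `y t ∉ S_m`, the record at `t` is `L` when `L ∈ S_m` (through the
left-limit clause of `srec`), and the record frozen at time `s₀` when `L ∉ S_m`; either way
`R_m y` is left-continuous at `t`. Hence `y t ∈ S_m`, so `R_m y t = y t`, and `y t = L` would
again make `R_m y` left-continuous. -/

namespace Soft

variable {T t s₀ : ℝ} {P : Sd → Prop} {x : ℝ → Sd}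

lemma lf_eq_nhdsLT (ht₀ : 0 < t) (htT : t ≤ T) : lf T t = 𝓝[<] t := by
  have hIco : Icc 0 T ∩ Iio t = Ico 0 t :=
    Set.ext fun u => ⟨fun ⟨⟨hu₀, _⟩, hut⟩ => ⟨hu₀, hut⟩,
      fun ⟨hu₀, hut⟩ => ⟨⟨hu₀, hut.le.trans htT⟩, hut⟩⟩
  rw [lf, hIco, nhdsWithin_Ico_eq_nhdsLT ht₀]

lemma leftLim_unique (ht₀ : 0 < t) (htT : t ≤ T) {a b : Sd} (ha : leftLim T x t a)
    (hb : leftLim T x t b) : a = b := by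
  unfold leftLim at ha hb
  rw [lf_eq_nhdsLT ht₀ htT] at ha hb
  exact tendsto_nhds_unique ha hb

lemma leftLim_le_of_forall_Icc (ht₀ : 0 < t) (htT : t ≤ T) {L c : Sd} (hL : leftLim T x t L)
    (h : ∀ u ∈ Icc 0 T, x u ≤ c) : L ≤ c := by
  have hev : ∀ᶠ u in lf T t, x u ≤ c :=
    eventually_of_mem self_mem_nhdsWithin fun u hu => h u hu.1
  unfold leftLim at hL
  rw [lf_eq_nhdsLT ht₀ htT] at hL hev
  exact le_of_tendsto hL hev

lemma leftLim_of_eqOn_Ioo (ht₀ : 0 < t) (htT : t ≤ T) (hs₀ : s₀ < t) {f : ℝ → Sd} {c : Sd}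
    (h : ∀ u ∈ Ioo s₀ t, f u = c) : leftLim T f t c := by
  unfold leftLim
  rw [lf_eq_nhdsLT ht₀ htT]
  refine tendsto_const_nhds.congr' ?_
  filter_upwards [Ioo_mem_nhdsLT hs₀] with u hu
  exact (h u hu).symm

lemma exists_eqOn_Ioo_of_leftLim (ht₀ : 0 < t) (htT : t ≤ T) {L : Sd} (hL : leftLim T x t L)
    (hLtop : L ≠ ⊤) : ∃ s₀, 0 ≤ s₀ ∧ s₀ < t ∧ ∀ u ∈ Ioo s₀ t, x u = L := by
  unfold leftLim at hL
  rw [lf_eq_nhdsLT ht₀ htT, ENat.nhds_eq_pure hLtop, tendsto_pure] at hL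
  obtain ⟨s₀, ⟨hs₀, hs₀t⟩, hsub⟩ := (mem_nhdsLT_iff_exists_mem_Ico_Ioo_subset ht₀).mp hL
  exact ⟨s₀, hs₀, hs₀t, hsub⟩

lemma lastVisit_eq_self (ht₀ : 0 ≤ t) (h : P (x t)) : lastVisit P x t = t :=
  IsGreatest.csSup_eq ⟨⟨⟨ht₀, le_rfl⟩, h⟩, fun _ hs => hs.1.2⟩

lemma lastVisit_eq_of_forall_Ioo (hs₀ : 0 ≤ s₀) (hs₀t : s₀ < t)
    (h : ∀ u ∈ Ioo s₀ t, P (x u)) : lastVisit P x t = t := by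
  have hsub : Ioo s₀ t ⊆ {s | s ∈ Icc 0 t ∧ P (x s)} :=
    fun u hu => ⟨⟨hs₀.trans hu.1.le, hu.2.le⟩, h u hu⟩
  refine le_antisymm (csSup_le ((nonempty_Ioo.mpr hs₀t).mono hsub) fun _ hs => hs.1.2) ?_
  calc t = sSup (Ioo s₀ t) := (csSup_Ioo hs₀t).symm
    _ ≤ lastVisit P x t :=
      csSup_le_csSup ⟨t, fun _ hs => hs.1.2⟩ (nonempty_Ioo.mpr hs₀t) hsub

lemma srec_eq_self (ht₀ : 0 ≤ t) (h : P (x t)) : srec T P x t = x t := by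
  rw [srec, lastVisit_eq_self ht₀ h, if_pos ⟨t, ⟨ht₀, le_rfl⟩, h⟩, if_pos h]

lemma srec_eq_of_visits_eq {s s' : ℝ}
    (h : {u | u ∈ Icc 0 s ∧ P (x u)} = {u | u ∈ Icc 0 s' ∧ P (x u)}) :
    srec T P x s = srec T P x s' := by
  have hex : (∃ u ∈ Icc 0 s, P (x u)) ↔ ∃ u ∈ Icc 0 s', P (x u) := by
    simpa only [Set.Nonempty, mem_ofPred_eq, and_assoc] using Iff.of_eq (congrArg Set.Nonempty h)
  classical
  rw [srec, srec, lastVisit, lastVisit, h]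
  exact if_congr hex rfl rfl

lemma srec_eq_of_forall_Ioc_not {s : ℝ} (hs : s₀ ≤ s) (h : ∀ u ∈ Ioc s₀ s, ¬P (x u)) :
    srec T P x s = srec T P x s₀ := by
  refine srec_eq_of_visits_eq (Set.ext fun u => ⟨?_, ?_⟩)
  · rintro ⟨⟨hu₀, hus⟩, hPu⟩
    exact ⟨⟨hu₀, not_lt.mp fun hs₀u => h u ⟨hs₀u, hus⟩ hPu⟩, hPu⟩
  · rintro ⟨⟨hu₀, hus₀⟩, hPu⟩
    exact ⟨⟨hu₀, hus₀.trans hs⟩, hPu⟩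

lemma srec_eq_of_leftLim_mem (ht₀ : 0 < t) (htT : t ≤ T) (hs₀ : 0 ≤ s₀) (hs₀t : s₀ < t)
    {L : Sd} (hx : ∀ u ∈ Ioo s₀ t, x u = L) (hPL : P L) (hxt : ¬P (x t)) :
    srec T P x t = L := by
  have hvisit : ∀ u ∈ Ioo s₀ t, P (x u) := fun u hu => hx u hu ▸ hPL
  have hlim : ∃ L', leftLim T x t L' := ⟨L, leftLim_of_eqOn_Ioo ht₀ htT hs₀t hx⟩
  obtain ⟨u, hu⟩ := nonempty_Ioo.mpr hs₀t
  rw [srec, if_pos ⟨u, ⟨hs₀.trans hu.1.le, hu.2.le⟩, hvisit u hu⟩,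
    lastVisit_eq_of_forall_Ioo hs₀ hs₀t hvisit, if_neg hxt, dif_pos hlim]
  exact leftLim_unique ht₀ htT hlim.choose_spec (leftLim_of_eqOn_Ioo ht₀ htT hs₀t hx)

lemma leftLim_srec_of_not_mem (ht₀ : 0 < t) (htT : t ≤ T) (hs₀ : 0 ≤ s₀) (hs₀t : s₀ < t)
    {L : Sd} (hx : ∀ u ∈ Ioo s₀ t, x u = L) (hxt : ¬P (x t)) :
    leftLim T (srec T P x) t (srec T P x t) := by
  by_cases hPL : P L
  · rw [srec_eq_of_leftLim_mem ht₀ htT hs₀ hs₀t hx hPL hxt]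
    exact leftLim_of_eqOn_Ioo ht₀ htT hs₀t fun u hu =>
      (srec_eq_self (hs₀.trans hu.1.le) (hx u hu ▸ hPL)).trans (hx u hu)
  · have hout : ∀ u ∈ Ioc s₀ t, ¬P (x u) := fun u hu => by
      rcases hu.2.lt_or_eq with hut | rfl
      · exact hx u ⟨hu.1, hut⟩ ▸ hPL
      · exact hxt
    rw [srec_eq_of_forall_Ioc_not hs₀t.le hout]
    exact leftLim_of_eqOn_Ioo ht₀ htT hs₀t fun u hu =>
      srec_eq_of_forall_Ioc_not hu.1.le fun v hv => hout v ⟨hv.1, hv.2.trans hu.2.le⟩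

end Soft

open Soft Filter Topology in
theorem stmt12_general (T : ℝ) (m : ℕ) (y : ℝ → Soft.Sd)
    (hy : Soft.memD T (m + 1) y) (t : ℝ) (ht : t ∈ Set.Ioc 0 T)
    (hdisc : ¬ Soft.leftLim T (Soft.Rm T m y) t (Soft.Rm T m y t)) :
    y t = Soft.Rm T m y t ∧ ¬ Soft.leftLim T y t (y t) := by
  obtain ⟨ht₀, htT⟩ := ht
  obtain ⟨L, hL⟩ := hy.2.2 t ⟨ht₀, htT⟩
  have hLtop : L ≠ ⊤ :=
    ne_top_of_le_ne_top (ENat.natCast_ne_top (m + 1)) (leftLim_le_of_forall_Icc ht₀ htT hL hy.1)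
  obtain ⟨s₀, hs₀, hs₀t, hyL⟩ := exists_eqOn_Ioo_of_leftLim ht₀ htT hL hLtop
  have hyt : y t ≤ m := by
    by_contra hyt
    exact hdisc (leftLim_srec_of_not_mem ht₀ htT hs₀ hs₀t hyL hyt)
  have hRt : Rm T m y t = y t := srec_eq_self ht₀.le hyt
  refine ⟨hRt.symm, fun hcont => hdisc ?_⟩
  have hLt : L = y t := leftLim_unique ht₀ htT hL hcont
  rw [hRt]
  exact leftLim_of_eqOn_Ioo ht₀ htT hs₀t fun u hu =>
    (srec_eq_self (hs₀.trans hu.1.le) (hyL u hu ▸ hLt ▸ hyt)).trans (hyL u hu ▸ hLt)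

open Soft Filter Topology in
/-- Let `y ∈ D([0,T], S_{m+1})` and `x = R_m y`. If `x` is discontinuous at `t ∈ (0,T]`,
then `y(t) = x(t)` and `y` is discontinuous at `t`. -/
theorem stmt12 (T : ℝ) (hT : 0 < T) (m : ℕ) (y : ℝ → Soft.Sd)
    (hy : Soft.memD T (m + 1) y) (t : ℝ) (ht : t ∈ Set.Ioc 0 T)
    (hdisc : ¬ Soft.leftLim T (Soft.Rm T m y) t (Soft.Rm T m y t)) :
    y t = Soft.Rm T m y t ∧ ¬ Soft.leftLim T y t (y t) :=
  stmt12_general T m y hy t ht hdisc
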